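/- Let q : ℝ × ℝ → ℂ with q(·, t) integrable on ℝ for each t, and set U(y,t) := [[0, q(y,t)],[q(−y,−t), 0]]. Suppose Ψ : ℝ × ℝ × ℝ → M₂(ℂ) is bounded, continuous and satisfies the Volterra integral equation Ψ(x,t,k) = I + ∫_{−∞}^{x} e^{ik(y−x)σ̂₃}( U(y,t) Ψ(y,t,k) ) dy for all x, t ∈ ℝ and k ∈ ℝ. Then the function Ψ̃(x,t,k) := Λ · Ψ(−x, −t, k) · Λ⁻¹ satisfies the companion Volterra equation Ψ̃(x,t,k) = I − ∫_{x}^{∞} e^{ik(y−x)σ̂₃}( U(y,t) Ψ̃(y,t,k) ) dy for all x, t ∈ ℝ and k ∈ ℝ. (This is the second symmetry used by the paper to derive s₁₂ = s₂₁ in (2.11).) -/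

import Mathlib

open Matrix MeasureTheory Set

noncomputable section

/-- Λ = [[0,-1],[1,0]]. -/
def Lam : Matrix (Fin 2) (Fin 2) ℂ := !![0, -1; 1, 0]

/-- Λ⁻¹ = [[0,1],[-1,0]]. -/
def LamInv : Matrix (Fin 2) (Fin 2) ℂ := !![0, 1; -1, 0]

/-- `e^{θσ̂₃}A = e^{θσ₃} A e^{-θσ₃}`: the (1,2)-entry is multiplied by `e^{2θ}`
and the (2,1)-entry by `e^{-2θ}`. -/
def sigma3Conj (θ : ℂ) (A : Matrix (Fin 2) (Fin 2) ℂ) : Matrix (Fin 2) (Fin 2) ℂ :=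
  !![A 0 0, Complex.exp (2 * θ) * A 0 1; Complex.exp (-(2 * θ)) * A 1 0, A 1 1]

/-- U(y,t). -/
def Umat (q : ℝ → ℝ → ℂ) (y t : ℝ) : Matrix (Fin 2) (Fin 2) ℂ :=
  !![0, q y t; q (-y) (-t), 0]

/-- Ψ̃(x,t,k) = Λ Ψ(-x,-t,k) Λ⁻¹. -/
def PsiTilde (Ψ : ℝ → ℝ → ℝ → Matrix (Fin 2) (Fin 2) ℂ) (x t k : ℝ) :
    Matrix (Fin 2) (Fin 2) ℂ :=
  Lam * Ψ (-x) (-t) k * LamInv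

/-!
Conjugation by `Λ` swaps the two diagonal entries and the two off-diagonal entries (up to sign),
so it sends `U(-y,-t)` to `-U(y,t)` and intertwines `e^{θσ̂₃}` with `e^{-θσ̂₃}`.
Conjugating the Volterra equation for `Ψ` at `(-x,-t)` by `Λ` and substituting `y ↦ -y`
turns `∫_{-∞}^{-x}` into `∫_x^{∞}`, and the sign of `U` into the minus sign of the companion
equation.
-/

lemma Lam_mul_LamInv : Lam * LamInv = 1 := by
  simp [Lam, LamInv, Matrix.one_fin_two]

lemma LamInv_mul_Lam : LamInv * Lam = 1 := by
  simp [Lam, LamInv, Matrix.one_fin_two]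

lemma Lam_mul_mul_LamInv_apply (A : Matrix (Fin 2) (Fin 2) ℂ) (i j : Fin 2) :
    (Lam * A * LamInv) i j = (if i = j then 1 else -1) * A i.rev j.rev := by
  fin_cases i <;> fin_cases j <;>
    simp [Lam, LamInv, Matrix.mul_apply, Fin.sum_univ_two, Matrix.vecMul, dotProduct]

lemma integral_Lam_mul_mul_LamInv_apply {α : Type*} [MeasurableSpace α] (μ : Measure α)
    (g : α → Matrix (Fin 2) (Fin 2) ℂ) (i j : Fin 2) :
    ∫ a, (Lam * g a * LamInv) i j ∂μ =
      (Lam * Matrix.of (fun i j => ∫ a, g a i j ∂μ) * LamInv) i j := by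
  simp only [Lam_mul_mul_LamInv_apply, integral_const_mul, Matrix.of_apply]

lemma Umat_eq_neg_Lam_mul_mul_LamInv (q : ℝ → ℝ → ℂ) (y t : ℝ) :
    Umat q y t = -(Lam * Umat q (-y) (-t) * LamInv) := by
  ext i j
  fin_cases i <;> fin_cases j <;> simp [Umat, Lam, LamInv]

lemma Umat_mul_PsiTilde (q : ℝ → ℝ → ℂ) (Ψ : ℝ → ℝ → ℝ → Matrix (Fin 2) (Fin 2) ℂ)
    (y t k : ℝ) :
    Umat q y t * PsiTilde Ψ y t k = -(Lam * (Umat q (-y) (-t) * Ψ (-y) (-t) k) * LamInv) := by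
  rw [Umat_eq_neg_Lam_mul_mul_LamInv, PsiTilde]
  simp only [Matrix.neg_mul, Matrix.mul_assoc, ← Matrix.mul_assoc LamInv Lam, LamInv_mul_Lam,
    Matrix.one_mul]

lemma sigma3Conj_neg (θ : ℂ) (A : Matrix (Fin 2) (Fin 2) ℂ) :
    sigma3Conj θ (-A) = -sigma3Conj θ A := by
  ext i j
  fin_cases i <;> fin_cases j <;> simp [sigma3Conj]

lemma sigma3Conj_Lam_mul_mul_LamInv (θ : ℂ) (A : Matrix (Fin 2) (Fin 2) ℂ) :
    sigma3Conj θ (Lam * A * LamInv) = Lam * sigma3Conj (-θ) A * LamInv := by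
  ext i j
  fin_cases i <;> fin_cases j <;> simp [sigma3Conj, Lam_mul_mul_LamInv_apply]

lemma sigma3Conj_Umat_mul_PsiTilde (q : ℝ → ℝ → ℂ) (Ψ : ℝ → ℝ → ℝ → Matrix (Fin 2) (Fin 2) ℂ)
    (θ : ℂ) (y t k : ℝ) :
    sigma3Conj θ (Umat q y t * PsiTilde Ψ y t k) =
      -(Lam * sigma3Conj (-θ) (Umat q (-y) (-t) * Ψ (-y) (-t) k) * LamInv) := by
  rw [Umat_mul_PsiTilde, sigma3Conj_neg, sigma3Conj_Lam_mul_mul_LamInv]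

lemma integral_Ici_eq_integral_Iic_comp_neg {E : Type*} [NormedAddCommGroup E] [NormedSpace ℝ E]
    (f : ℝ → E) (x : ℝ) : ∫ y in Ici x, f y = ∫ y in Iic (-x), f (-y) := by
  rw [integral_comp_neg_Iic, neg_neg, integral_Ici_eq_integral_Ioi]

theorem volterra_second_symmetry_general (q : ℝ → ℝ → ℂ)
    (Ψ : ℝ → ℝ → ℝ → Matrix (Fin 2) (Fin 2) ℂ)
    (hvolt : ∀ (x t k : ℝ) (i j : Fin 2),
      Ψ x t k i j = (1 : Matrix (Fin 2) (Fin 2) ℂ) i j +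
        ∫ y in Iic x, (sigma3Conj (Complex.I * (k : ℂ) * ((y : ℂ) - (x : ℂ)))
          (Umat q y t * Ψ y t k)) i j) :
    ∀ (x t k : ℝ) (i j : Fin 2),
      PsiTilde Ψ x t k i j = (1 : Matrix (Fin 2) (Fin 2) ℂ) i j -
        ∫ y in Ici x, (sigma3Conj (Complex.I * (k : ℂ) * ((y : ℂ) - (x : ℂ)))
          (Umat q y t * PsiTilde Ψ y t k)) i j := by
  intro x t k i j
  set g : ℝ → Matrix (Fin 2) (Fin 2) ℂ := fun y =>
    sigma3Conj (Complex.I * (k : ℂ) * ((y : ℂ) - ((-x : ℝ) : ℂ))) (Umat q y (-t) * Ψ y (-t) k)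
  have hΨ : Ψ (-x) (-t) k = 1 + Matrix.of fun i j => ∫ y in Iic (-x), g y i j := by
    ext i j
    exact hvolt (-x) (-t) k i j
  calc PsiTilde Ψ x t k i j
      = (Lam * 1 * LamInv + Lam * Matrix.of (fun i j => ∫ y in Iic (-x), g y i j) * LamInv :
          Matrix (Fin 2) (Fin 2) ℂ) i j := by
        rw [PsiTilde, hΨ, Matrix.mul_add, Matrix.add_mul]
    _ = (1 : Matrix (Fin 2) (Fin 2) ℂ) i j + ∫ y in Iic (-x), (Lam * g y * LamInv) i j := by
        rw [Matrix.mul_one, Lam_mul_LamInv, Matrix.add_apply, integral_Lam_mul_mul_LamInv_apply]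
    _ = _ := by
        rw [integral_Ici_eq_integral_Iic_comp_neg, sub_eq_add_neg, ← integral_neg]
        congr 2 with y
        have hθ :
            -(Complex.I * k * (((-y : ℝ) : ℂ) - x)) = Complex.I * k * (y - ((-x : ℝ) : ℂ)) := by
          push_cast
          ring
        rw [sigma3Conj_Umat_mul_PsiTilde, Matrix.neg_apply, neg_neg, hθ, neg_neg]

/-- The second symmetry used to derive s₁₂ = s₂₁ in (2.11): if Ψ solves the
Volterra equation (2.4a) then ΛΨ(-x,-t,k)Λ⁻¹ solves the companion one (2.4b). -/
theorem volterra_second_symmetry (q : ℝ → ℝ → ℂ)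
    (hint : ∀ t : ℝ, Integrable (fun y => q y t))
    (Ψ : ℝ → ℝ → ℝ → Matrix (Fin 2) (Fin 2) ℂ)
    (hbdd : ∃ M : ℝ, ∀ (x t k : ℝ) (i j : Fin 2), ‖Ψ x t k i j‖ ≤ M)
    (hcont : ∀ i j : Fin 2, Continuous fun p : ℝ × ℝ × ℝ => Ψ p.1 p.2.1 p.2.2 i j)
    (hvolt : ∀ (x t k : ℝ) (i j : Fin 2),
      Ψ x t k i j = (1 : Matrix (Fin 2) (Fin 2) ℂ) i j +
        ∫ y in Iic x, (sigma3Conj (Complex.I * (k : ℂ) * ((y : ℂ) - (x : ℂ)))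
          (Umat q y t * Ψ y t k)) i j) :
    ∀ (x t k : ℝ) (i j : Fin 2),
      PsiTilde Ψ x t k i j = (1 : Matrix (Fin 2) (Fin 2) ℂ) i j -
        ∫ y in Ici x, (sigma3Conj (Complex.I * (k : ℂ) * ((y : ℂ) - (x : ℂ)))
          (Umat q y t * PsiTilde Ψ y t k)) i j :=
  volterra_second_symmetry_general q Ψ hvolt
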